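/- arXiv:2510.21267 — 2 statements merged into one kernel-verified Lean document; each statement's English description precedes it below -/
import Mathlib

section
/- Let n ≥ 1 and let ε > 0. Suppose α = (α_1, …, α_n) is a probability distribution on n outcomes (each α_j ≥ 0 and ∑_j α_j = 1) with every entry satisfying α_j ≥ ε. Then the Shannon entropy H(α) = -∑_{j=1}^n α_j log α_j satisfies H(α) ≥ -(1-(n-1)ε) · log(1-(n-1)ε) - (n-1) · ε · log ε. -/
/-!
Write `α j = ε + β j` with `β j ≥ 0`. For a concave function `f`, merging two excesses never
increases the sum: `f ε + f (ε + a + b) ≤ f (ε + a) + f (ε + b)`. Piling all the excess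
`∑ β j = 1 - n ε` onto a single coordinate therefore minimises the entropy `∑ negMulLog (α j)`,
and the resulting distribution `(1 - (n - 1) ε, ε, …, ε)` has exactly the stated entropy.
-/

open Real Finset

theorem ConcaveOn.map_outer_add_le_map_inner_add {s : Set ℝ} {f : ℝ → ℝ}
    (hf : ConcaveOn ℝ s f) {x a b : ℝ} (hx : x ∈ s) (hz : x + a + b ∈ s) (ha : 0 ≤ a)
    (hb : 0 ≤ b) :
    f x + f (x + a + b) ≤ f (x + a) + f (x + b) := by
  rcases (add_nonneg ha hb).eq_or_lt with hab | hab
  · obtain ⟨rfl, rfl⟩ : a = 0 ∧ b = 0 := ⟨by linarith, by linarith⟩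
    simp
  -- `x + a` and `x + b` lie in `[x, x + a + b]` with mirror-image barycentric weights
  have hwa : b / (a + b) + a / (a + b) = 1 := by field_simp; ring
  have hwb : a / (a + b) + b / (a + b) = 1 := by field_simp
  have h₁ := hf.2 hx hz (by positivity) (by positivity) hwa
  have h₂ := hf.2 hx hz (by positivity) (by positivity) hwb
  have e₁ : (b / (a + b)) • x + (a / (a + b)) • (x + a + b) = x + a := by
    simp only [smul_eq_mul]; field_simp; ring
  have e₂ : (a / (a + b)) • x + (b / (a + b)) • (x + a + b) = x + b := by
    simp only [smul_eq_mul]; field_simp; ring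
  rw [e₁, smul_eq_mul, smul_eq_mul] at h₁
  rw [e₂, smul_eq_mul, smul_eq_mul] at h₂
  linear_combination h₁ + h₂ - (f x + f (x + a + b)) * hwa

theorem ConcaveOn.map_add_sum_le_sum_map_add {s : Set ℝ} {f : ℝ → ℝ} (hf : ConcaveOn ℝ s f)
    {ι : Type*} {t : Finset ι} (ht : t.Nonempty) {x : ℝ} {β : ι → ℝ}
    (hβ : ∀ j ∈ t, 0 ≤ β j) (hx : x ∈ s) (hxβ : x + ∑ j ∈ t, β j ∈ s) :
    f (x + ∑ j ∈ t, β j) + (#t - 1 : ℝ) * f x ≤ ∑ j ∈ t, f (x + β j) := by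
  induction ht using Finset.Nonempty.cons_induction with
  | singleton j => simp
  | cons j t hj ht ih =>
    simp only [mem_cons, forall_eq_or_imp] at hβ
    rw [sum_cons] at hxβ ⊢
    have hrest : 0 ≤ ∑ i ∈ t, β i := sum_nonneg hβ.2
    have hxt : x + ∑ i ∈ t, β i ∈ s :=
      hf.1.ordConnected.out hx hxβ ⟨by linarith, by linarith⟩
    have hpair := hf.map_outer_add_le_map_inner_add hx (by rwa [add_assoc]) hβ.1 hrest
    rw [← add_assoc, sum_cons, card_cons, Nat.cast_succ]
    linarith [ih hβ.2 hxt]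

open Real in
theorem entropy_lower_bound_general (n : ℕ) (ε : ℝ) (hε : 0 < ε)
    (α : Fin n → ℝ) (hα : ∀ j, ε ≤ α j) (hsum : ∑ j, α j = 1) :
    -(1 - ((n : ℝ) - 1) * ε) * Real.log (1 - ((n : ℝ) - 1) * ε)
        - ((n : ℝ) - 1) * ε * Real.log ε
      ≤ -∑ j, α j * Real.log (α j) := by
  have hne : (univ : Finset (Fin n)).Nonempty := nonempty_of_sum_ne_zero (hsum ▸ one_ne_zero)
  have hexcess : ε + ∑ j, (α j - ε) = 1 - ((n : ℝ) - 1) * ε := by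
    simp only [sum_sub_distrib, hsum, sum_const, card_univ, Fintype.card_fin, nsmul_eq_mul]
    ring
  have hβ : ∀ j ∈ univ, 0 ≤ α j - ε := fun j _ => sub_nonneg.2 (hα j)
  have key := concaveOn_negMulLog.map_add_sum_le_sum_map_add hne hβ (Set.mem_Ici.2 hε.le)
    (Set.mem_Ici.2 (add_nonneg hε.le (sum_nonneg hβ)))
  simp only [hexcess, add_sub_cancel, card_univ, Fintype.card_fin, negMulLog] at key
  simpa [sum_neg_distrib, neg_mul, mul_assoc] using key

open Real in
/-- Lower bound of Shannon entropy for a probability distribution on `n` outcomes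
all of whose entries are at least `ε`. -/
theorem entropy_lower_bound (n : ℕ) (hn : 1 ≤ n) (ε : ℝ) (hε : 0 < ε)
    (α : Fin n → ℝ) (hα : ∀ j, ε ≤ α j) (hsum : ∑ j, α j = 1) :
    -(1 - ((n : ℝ) - 1) * ε) * Real.log (1 - ((n : ℝ) - 1) * ε)
        - ((n : ℝ) - 1) * ε * Real.log ε
      ≤ -∑ j, α j * Real.log (α j) :=
  entropy_lower_bound_general n ε hε α hα hsum
end

section
/- Let ε > 0 and define F : ℝ → ℝ by F(x) = -(1-(x-1)ε) · log(1-(x-1)ε) - (x-1) · ε · log ε. Then F is strictly monotonically increasing on the set of x > 0 with ε ≤ 1/x (equivalently, 1 - (x-1)ε ≥ ε). In particular, for natural numbers n₁ < n₂ with ε ≤ 1/n₂, the entropy lower bound F(n₁) is strictly less than F(n₂). -/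
/-!
Writing `u(x) = 1 - (x - 1) ε` for the largest admissible probability, `F = negMulLog ∘ u` minus a
linear term, so `F'(x) = ε (log u(x) + 1 - log ε)`. For `x < 1/ε` we have `u(x) > ε`, hence
`F' > 0` on the whole half-line `x ≤ 1/ε`, which contains both the set in the statement and every
natural number `n ≤ n₂` (including `0`).
-/

noncomputable def entropyBound (ε x : ℝ) : ℝ :=
  -(1 - (x - 1) * ε) * Real.log (1 - (x - 1) * ε) - (x - 1) * ε * Real.log ε

open Real Set

lemma continuous_entropyBound (ε : ℝ) : Continuous (entropyBound ε) := by
  change Continuous fun x => negMulLog (1 - (x - 1) * ε) - (x - 1) * ε * log ε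
  fun_prop

lemma hasDerivAt_entropyBound {ε x : ℝ} (hx : 1 - (x - 1) * ε ≠ 0) :
    HasDerivAt (entropyBound ε) (ε * (log (1 - (x - 1) * ε) + 1 - log ε)) x := by
  have hu : HasDerivAt (fun y : ℝ => 1 - (y - 1) * ε) (-ε) x := by
    simpa using (((hasDerivAt_id x).sub_const 1).mul_const ε).const_sub 1
  have hlin : HasDerivAt (fun y : ℝ => (y - 1) * ε * log ε) (ε * log ε) x := by
    simpa using (((hasDerivAt_id x).sub_const 1).mul_const ε).mul_const (log ε)
  refine (((hasDerivAt_negMulLog hx).comp x hu).sub hlin).congr_deriv ?_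
  ring

theorem entropyBound_strictMonoOn_Iic {ε : ℝ} (hε : 0 < ε) :
    StrictMonoOn (entropyBound ε) (Iic ε⁻¹) := by
  refine strictMonoOn_of_deriv_pos (convex_Iic _) (continuous_entropyBound ε).continuousOn ?_
  intro x hx
  rw [interior_Iic] at hx
  have hxε : x * ε < 1 := (lt_div_iff₀ hε).1 (by rwa [one_div])
  have hε_lt : ε < 1 - (x - 1) * ε := by linarith
  rw [(hasDerivAt_entropyBound (hε.trans hε_lt).ne').deriv]
  exact mul_pos hε (by linarith [log_lt_log hε hε_lt])

/-- The minimum-entropy lower bound `F(x) = -(1-(x-1)ε)·log(1-(x-1)ε) - (x-1)·ε·log ε`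
is strictly increasing on `{x | 0 < x ∧ ε ≤ 1/x}`; in particular for natural numbers
`n₁ < n₂` with `ε ≤ 1/n₂` we have `F(n₁) < F(n₂)`. -/
theorem entropyBound_strictMonoOn (ε : ℝ) (hε : 0 < ε) :
    StrictMonoOn (entropyBound ε) {x : ℝ | 0 < x ∧ ε ≤ 1 / x} ∧
      ∀ n₁ n₂ : ℕ, n₁ < n₂ → ε ≤ 1 / (n₂ : ℝ) →
        entropyBound ε (n₁ : ℝ) < entropyBound ε (n₂ : ℝ) := by
  have le_inv_of_le_one_div {x : ℝ} (hx : 0 < x) (h : ε ≤ 1 / x) : x ≤ ε⁻¹ :=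
    (le_inv_comm₀ hε hx).1 (by rwa [one_div] at h)
  have hmono := entropyBound_strictMonoOn_Iic hε
  refine ⟨hmono.mono fun x hx => le_inv_of_le_one_div hx.1 hx.2, fun n₁ n₂ hn hn₂ => ?_⟩
  have hn₂_le : (n₂ : ℝ) ≤ ε⁻¹ := le_inv_of_le_one_div (Nat.cast_pos.2 (Nat.zero_lt_of_lt hn)) hn₂
  exact hmono ((Nat.cast_le.2 hn.le).trans hn₂_le) hn₂_le (Nat.cast_lt.2 hn)
end
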